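/- arXiv:1403.2840 — 6 statements merged into one kernel-verified Lean document; each statement's English description precedes it below -/
import Mathlib

section
/- If h : ℤ → ℤ is a C2-admissible numerical function with parameter s, and for 1 ≤ i ≤ s we set k_i = #{n ∈ ℤ : h(n) ≥ s+1-i}, then the sequence k_1, k_2, ..., k_s is a strictly increasing sequence of positive integers: 0 < k_1 < k_2 < ... < k_s. -/
/-! Since `h` vanishes outside a finite interval, every superlevel set `{n | c ≤ h n}` with `c ≥ 1`
is finite. For `1 ≤ c ≤ s` we have `h (c - 1) = c`, so `c - 1` lies in `{n | c ≤ h n}` but not in the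
smaller set `{n | c + 1 ≤ h n}`: the cardinalities `k_i` of these nested sets increase strictly. -/

def C2Admissible (h : ℤ → ℤ) (s : ℤ) : Prop :=
  1 ≤ s ∧ (∀ n < 0, h n = 0) ∧ (∀ n, 0 ≤ n → n ≤ s - 1 → h n = n + 1) ∧
  (∀ n, s - 1 ≤ n → h (n + 1) ≤ h n) ∧ (∃ N, ∀ n ≥ N, h n = 0)

def DecreasingType (h : ℤ → ℤ) : Prop :=
  ∀ a, h (a + 1) < h a → ∀ n, a ≤ n → h (n + 1) < h n ∨ h n = 0

noncomputable def genus (h : ℤ → ℤ) : ℤ :=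
  ∑ᶠ n : ℤ, if 2 ≤ n then (n - 1) * h n else 0

def hCI (m n ℓ : ℤ) : ℤ :=
  if 0 ≤ ℓ ∧ ℓ ≤ m - 1 then ℓ + 1
  else if m - 1 ≤ ℓ ∧ ℓ ≤ n - 1 then m
  else if n - 1 ≤ ℓ ∧ ℓ ≤ m + n - 1 then m + n - 1 - ℓ
  else 0

theorem Set.ncard_setOf_add_one_le_lt {α : Type*} {f : α → ℤ} {c : ℤ}
    (hfin : {a | c ≤ f a}.Finite) (hc : ∃ a, f a = c) :
    {a | c + 1 ≤ f a}.ncard < {a | c ≤ f a}.ncard := by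
  obtain ⟨a, ha⟩ := hc
  refine Set.ncard_lt_ncard ⟨fun b hb => by grind, fun hsub => ?_⟩ hfin
  have : c + 1 ≤ f a := hsub (show c ≤ f a by omega)
  omega

namespace C2Admissible

variable {h : ℤ → ℤ} {s : ℤ}

theorem finite_setOf_le (hadm : C2Admissible h s) {c : ℤ} (hc : 1 ≤ c) :
    {n | c ≤ h n}.Finite := by
  obtain ⟨-, hneg, -, -, N, hN⟩ := hadm
  refine (Set.finite_Ico 0 N).subset fun n (hn : c ≤ h n) => ?_
  have h_ne : h n ≠ 0 := by omega
  exact ⟨not_lt.1 fun hlt => h_ne (hneg n hlt), not_le.1 fun hge => h_ne (hN n hge)⟩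

theorem apply_sub_one (hadm : C2Admissible h s) {c : ℤ} (hc : 1 ≤ c) (hcs : c ≤ s) :
    h (c - 1) = c := by
  rw [hadm.2.2.1 (c - 1) (by omega) (by omega)]
  ring

end C2Admissible

theorem biliaison_type_strictly_increasing (h : ℤ → ℤ) (s : ℤ)
    (hadm : C2Admissible h s) (k : ℤ → ℤ)
    (hk : ∀ i, 1 ≤ i → i ≤ s → k i = ({n : ℤ | s + 1 - i ≤ h n}.ncard : ℤ)) :
    0 < k 1 ∧ ∀ i, 1 ≤ i → i < s → k i < k (i + 1) := by
  have hs : 1 ≤ s := hadm.1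
  constructor
  · rw [hk 1 le_rfl hs, Nat.cast_pos, Set.ncard_pos (hadm.finite_setOf_le (by omega))]
    exact ⟨s - 1, by simp [hadm.apply_sub_one hs le_rfl]⟩
  · intro i hi his
    rw [hk i hi his.le, hk (i + 1) (by omega) (by omega), Nat.cast_lt,
      show s + 1 - i = s - i + 1 by ring, show s + 1 - (i + 1) = s - i by ring]
    exact Set.ncard_setOf_add_one_le_lt (hadm.finite_setOf_le (by omega))
      ⟨s - i - 1, hadm.apply_sub_one (by omega) (by omega)⟩
end

section
/- If h : ℤ → ℤ is a C2-admissible numerical function with parameter s and biliaison type (k_1,...,k_s) where k_i = #{n ∈ ℤ : h(n) ≥ s+1-i}, then the genus formulas agree: ∑_{n ≥ 2} (n-1)·h(n) = 1 + ∑_{i=1}^{s} k_i(k_i-3)/2 + ∑_{i=1}^{s} (s-i)·k_i. -/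
theorem two_mul_sum_Ico_sub_one (a : ℤ) {k : ℤ} (hk : 0 ≤ k) :
    2 * ∑ n ∈ Finset.Ico a (a + k), (n - 1) = k * (k - 3) + 2 * a * k := by
  induction k, hk using Int.leInduction with
  | base => simp
  | succ k hk ih =>
    rw [show Finset.Ico a (a + (k + 1)) = insert (a + k) (Finset.Ico a (a + k)) by
        ext n; simp only [Finset.mem_insert, Finset.mem_Ico]; omega,
      Finset.sum_insert (by simp), mul_add, ih]
    ring

theorem Set.OrdConnected.eq_Icc_of_isLeast_of_isGreatest {α : Type*} [Preorder α] {S : Set α}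
    {a b : α} (hS : S.OrdConnected) (ha : IsLeast S a) (hb : IsGreatest S b) :
    S = Set.Icc a b :=
  Set.Subset.antisymm (fun _ hx => ⟨ha.2 hx, hb.2 hx⟩) (hS.out ha.1 hb.1)

theorem finsum_mul_eq_sum_finsum_mem_setOf_le {α : Type*} (f h : α → ℤ) {s : ℤ}
    (h_nonneg : ∀ n, 0 ≤ h n) (h_le : ∀ n, h n ≤ s) (hfin : Function.HasFiniteSupport h) :
    ∑ᶠ n, f n * h n = ∑ j ∈ Finset.Icc 1 s, ∑ᶠ n ∈ {n | j ≤ h n}, f n := by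
  have layer : ∀ n, f n * h n = ∑ j ∈ Finset.Icc 1 s, {n | j ≤ h n}.indicator f n := by
    intro n
    have hfilter : {j ∈ Finset.Icc 1 s | j ≤ h n} = Finset.Icc 1 (h n) := by
      ext j; simp only [Finset.mem_filter, Finset.mem_Icc]; have := h_le n; omega
    simp only [Set.indicator_apply, Set.mem_ofPred_eq]
    rw [← Finset.sum_filter, hfilter, Finset.sum_const, Int.card_Icc, add_sub_cancel_right,
      nsmul_eq_mul, Int.toNat_of_nonneg (h_nonneg n), mul_comm]
  simp_rw [layer, finsum_mem_def]
  refine finsum_sum_comm _ _ fun j hj => hfin.subset fun n hn => ?_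
  have hj : 1 ≤ j := (Finset.mem_Icc.1 hj).1
  have hjn : n ∈ {n | j ≤ h n} := Set.support_indicator_subset hn
  exact Function.mem_support.2 (by rw [Set.mem_ofPred_eq] at hjn; omega)

namespace C2Admissible

variable {h : ℤ → ℤ} {s : ℤ}

theorem antitoneOn (hadm : C2Admissible h s) : AntitoneOn h (Set.Ici (s - 1)) :=
  antitoneOn_of_add_one_le Set.ordConnected_Ici fun n _ hn _ => hadm.2.2.2.1 n hn

theorem apply_nonneg (hadm : C2Admissible h s) (n : ℤ) : 0 ≤ h n := by
  have hanti := hadm.antitoneOn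
  obtain ⟨-, hneg, hinit, -, N, hN⟩ := hadm
  rcases lt_or_ge n 0 with hn | hn
  · rw [hneg n hn]
  rcases le_or_gt n (s - 1) with hns | hns
  · rw [hinit n hn hns]; omega
  · calc 0 = h (max n N) := (hN _ (le_max_right _ _)).symm
      _ ≤ h n := hanti (by simp; omega) (by simp; omega) (le_max_left _ _)

theorem apply_le (hadm : C2Admissible h s) (n : ℤ) : h n ≤ s := by
  have hanti := hadm.antitoneOn
  obtain ⟨hs, hneg, hinit, -, -⟩ := hadm
  rcases lt_or_ge n 0 with hn | hn
  · rw [hneg n hn]; omega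
  rcases le_or_gt n (s - 1) with hns | hns
  · rw [hinit n hn hns]; omega
  · calc h n ≤ h (s - 1) := hanti (by simp) (by simp; omega) hns.le
      _ = s := by rw [hinit (s - 1) (by omega) le_rfl]; ring

theorem hasFiniteSupport (hadm : C2Admissible h s) : Function.HasFiniteSupport h := by
  obtain ⟨-, hneg, -, -, N, hN⟩ := hadm
  refine (Set.finite_Ico 0 N).subset fun n hn => ?_
  by_contra hout
  rw [Set.mem_Ico, not_and_or, not_le, not_lt] at hout
  exact hn (hout.elim (hneg n) (hN n))

theorem genus_eq (hadm : C2Admissible h s) : genus h = ∑ᶠ n, (n - 1) * h n + 1 := by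
  have hsummand : ∀ n, (if 2 ≤ n then (n - 1) * h n else 0) =
      (n - 1) * h n + if n = 0 then 1 else 0 := by
    intro n
    obtain ⟨hs, hneg, hinit, -, -⟩ := hadm
    rcases lt_or_ge n 0 with hn | hn
    · simp [hneg n hn, hn.ne]
    · have h0 : h 0 = 1 := by rw [hinit 0 le_rfl (by omega)]; rfl
      rcases (show n = 0 ∨ n = 1 ∨ 2 ≤ n by omega) with rfl | rfl | hn2
      · simp [h0]
      · simp
      · simp [hn2, show n ≠ 0 by omega]
  have hfin : Function.HasFiniteSupport fun n => (n - 1) * h n :=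
    hadm.hasFiniteSupport.subset (Function.support_mul_subset_right _ _)
  have hsingle : Function.HasFiniteSupport fun n : ℤ => if n = 0 then (1 : ℤ) else 0 :=
    (Set.finite_singleton 0).subset fun n hn => by simpa using hn
  rw [genus, finsum_congr hsummand, finsum_add_distrib hfin hsingle,
    finsum_eq_single _ 0 fun n hn => if_neg hn, if_pos rfl]

theorem setOf_le_eq_Icc (hadm : C2Admissible h s) {j : ℤ} (hj : 1 ≤ j) (hjs : j ≤ s) :
    ∃ E, j - 1 ≤ E ∧ {n | j ≤ h n} = Set.Icc (j - 1) E := by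
  have hanti := hadm.antitoneOn
  obtain ⟨-, hneg, hinit, -, N, hN⟩ := hadm
  set L := {n | j ≤ h n}
  have hleast : IsLeast L (j - 1) := by
    refine ⟨by simp [L, hinit (j - 1) (by omega) (by omega)], fun n hn => ?_⟩
    by_contra! hlt
    rcases lt_or_ge n 0 with h0 | h0
    · simp [L, hneg n h0] at hn; omega
    · simp [L, hinit n h0 (by omega)] at hn; omega
  have hbdd : BddAbove L := ⟨N, fun n hn => by
    by_contra! hgt
    simp [L, hN n hgt.le] at hn; omega⟩
  have hgreatest : IsGreatest L (sSup L) :=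
    ⟨Int.csSup_mem hleast.nonempty hbdd, fun _ hn => le_csSup hbdd hn⟩
  have hconn : L.OrdConnected := by
    refine ⟨fun x hx y hy z hz => ?_⟩
    have hxz : j - 1 ≤ z := (hleast.2 hx).trans hz.1
    rcases le_or_gt z (s - 1) with hzs | hzs
    · show j ≤ h z
      rw [hinit z (by omega) hzs]; omega
    · have hzy : h y ≤ h z :=
        hanti (Set.mem_Ici.2 hzs.le) (Set.mem_Ici.2 (hzs.le.trans hz.2)) hz.2
      exact le_trans (α := ℤ) hy hzy
  exact ⟨sSup L, hleast.2 hgreatest.1, hconn.eq_Icc_of_isLeast_of_isGreatest hleast hgreatest⟩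

theorem setOf_le_eq_Ico (hadm : C2Admissible h s) {j : ℤ} (hj : 1 ≤ j) (hjs : j ≤ s) :
    {n | j ≤ h n} = ↑(Finset.Ico (j - 1) (j - 1 + ({n | j ≤ h n}.ncard : ℤ))) := by
  obtain ⟨E, hE, hL⟩ := hadm.setOf_le_eq_Icc hj hjs
  rw [hL, ← Finset.coe_Icc, Set.ncard_coe_finset, Int.card_Icc, Int.toNat_of_nonneg (by omega)]
  congr 1
  ext n
  simp only [Finset.mem_Icc, Finset.mem_Ico]
  omega

theorem two_mul_finsum_mem_setOf_le (hadm : C2Admissible h s) {j : ℤ} (hj : 1 ≤ j) (hjs : j ≤ s) :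
    2 * ∑ᶠ n ∈ {n | j ≤ h n}, (n - 1) =
      {n | j ≤ h n}.ncard * ({n | j ≤ h n}.ncard - 3) + 2 * (j - 1) * {n | j ≤ h n}.ncard := by
  set c : ℤ := ({n | j ≤ h n}.ncard : ℤ) with hc
  rw [hadm.setOf_le_eq_Ico hj hjs, ← hc, finsum_mem_coe_finset,
    two_mul_sum_Ico_sub_one _ (hc ▸ Nat.cast_nonneg _)]

end C2Admissible

theorem genus_formulas_agree (h : ℤ → ℤ) (s : ℤ)
    (hadm : C2Admissible h s) (k : ℤ → ℤ)
    (hk : ∀ i, 1 ≤ i → i ≤ s → k i = ({n : ℤ | s + 1 - i ≤ h n}.ncard : ℤ)) :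
    2 * (∑ᶠ n : ℤ, if 2 ≤ n then (n - 1) * h n else 0) =
      2 + (∑ i ∈ Finset.Icc (1 : ℤ) s, k i * (k i - 3))
        + 2 * ∑ i ∈ Finset.Icc (1 : ℤ) s, (s - i) * k i := by
  have hreflect : ∑ j ∈ Finset.Icc 1 s, ∑ᶠ n ∈ {n | j ≤ h n}, (n - 1) =
      ∑ i ∈ Finset.Icc 1 s, ∑ᶠ n ∈ {n | s + 1 - i ≤ h n}, (n - 1) :=
    Finset.sum_nbij' (s + 1 - ·) (s + 1 - ·) (by intro; simp; omega) (by intro; simp; omega)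
      (by intro; simp) (by intro; simp) (by intro; simp)
  have hlevel : ∀ i ∈ Finset.Icc 1 s,
      2 * ∑ᶠ n ∈ {n | s + 1 - i ≤ h n}, (n - 1) = k i * (k i - 3) + 2 * ((s - i) * k i) := by
    intro i hi
    obtain ⟨hi1, his⟩ := Finset.mem_Icc.1 hi
    rw [hadm.two_mul_finsum_mem_setOf_le (by omega) (by omega), hk i hi1 his]
    ring
  change 2 * genus h = _
  rw [hadm.genus_eq, finsum_mul_eq_sum_finsum_mem_setOf_le _ h hadm.apply_nonneg hadm.apply_le
      hadm.hasFiniteSupport, hreflect, mul_add, Finset.mul_sum, Finset.sum_congr rfl hlevel,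
    Finset.sum_add_distrib, Finset.mul_sum]
  ring
end

section
/- Let 1 ≤ m ≤ n be integers, let h_1 be a C2-admissible numerical function with parameter m, and define h_2(ℓ) = h_{m,n}(ℓ) - h_1(m+n-2-ℓ) for all ℓ ∈ ℤ, where h_{m,n} is the complete intersection h-vector of type m × n. If h_2 is C2-admissible (with some parameter s_2 ≥ 1), then h_2(ℓ) = 0 for all ℓ ≥ n-1; equivalently, b_2 := sup{ℓ : h_2(ℓ) > 0} satisfies b_2 ≤ n-2. -/
/-!
Past degree `n - 1` the complete-intersection h-vector is the linear tail `m + n - 1 - ℓ`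
(cut off at `0`), and `h₁ (m + n - 2 - ℓ)` is the same number, because the argument
`m + n - 2 - ℓ` is at most `m - 1`, where the admissible `h₁` is still `k ↦ k + 1` (cut off at `0`).
-/

theorem C2Admissible.eq_max_of_le_sub_one {h : ℤ → ℤ} {s k : ℤ} (hh : C2Admissible h s)
    (hk : k ≤ s - 1) : h k = max (k + 1) 0 := by
  obtain ⟨-, hneg, hinit, -, -⟩ := hh
  rcases lt_or_ge k 0 with hk₀ | hk₀
  · rw [hneg k hk₀]
    omega
  · rw [hinit k hk₀ hk]
    omega

theorem hCI_eq_max_of_sub_one_le {m n ℓ : ℤ} (hm : 0 ≤ m) (hmn : m ≤ n) (hℓ : n - 1 ≤ ℓ) :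
    hCI m n ℓ = max (m + n - 1 - ℓ) 0 := by
  unfold hCI
  split_ifs <;> omega

theorem linked_b2_le_general (m n : ℤ) (hmn : m ≤ n)
    (h₁ h₂ : ℤ → ℤ) (hh₁ : C2Admissible h₁ m)
    (hdef : ∀ ℓ, h₂ ℓ = hCI m n ℓ - h₁ (m + n - 2 - ℓ)) :
    ∀ ℓ, n - 1 ≤ ℓ → h₂ ℓ = 0 := by
  intro ℓ hℓ
  have hm : 0 ≤ m := by linarith [hh₁.1]
  rw [hdef, hCI_eq_max_of_sub_one_le hm hmn hℓ, hh₁.eq_max_of_le_sub_one (by omega)]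
  omega

theorem linked_b2_le (m n s₂ : ℤ) (hm : 1 ≤ m) (hmn : m ≤ n)
    (h₁ h₂ : ℤ → ℤ) (hh₁ : C2Admissible h₁ m)
    (hdef : ∀ ℓ, h₂ ℓ = hCI m n ℓ - h₁ (m + n - 2 - ℓ))
    (hh₂ : C2Admissible h₂ s₂) :
    ∀ ℓ, n - 1 ≤ ℓ → h₂ ℓ = 0 :=
  linked_b2_le_general m n hmn h₁ h₂ hh₁ hdef
end

section
/- Let 1 ≤ s ≤ t be integers. Define h_s(n) = n+1 for 0 ≤ n ≤ s-1 and 0 otherwise; h_t(n) = n+1 for 0 ≤ n ≤ t-1 and 0 otherwise; and h_U(n) = n+1 for 0 ≤ n ≤ t-1, h_U(n) = t+s-n for t ≤ n ≤ t+s-1, and 0 otherwise. Let G(h) = ∑_{n ≥ 2} (n-1)·h(n). Then G(h_U) - G(h_s) - G(h_t) + 1 = C(s+1,2)·t - C(s+1,3), where C(·,·) denotes binomial coefficients. -/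
open Finset

def ordinaryHVector (s : ℕ) (n : ℤ) : ℤ :=
  if 0 ≤ n ∧ n ≤ (s : ℤ) - 1 then n + 1 else 0

def unionHVector (s t : ℕ) (n : ℤ) : ℤ :=
  if 0 ≤ n ∧ n ≤ (t : ℤ) - 1 then n + 1
  else if (t : ℤ) ≤ n ∧ n ≤ (t : ℤ) + (s : ℤ) - 1 then (t : ℤ) + (s : ℤ) - n else 0

-- The weight `k - 1` vanishes at `k = 1`; starting there lets the sum split at any `t ≥ 1`.
theorem genus_eq_sum_Ico (h : ℤ → ℤ) (N : ℕ) (hN : ∀ n : ℤ, N ≤ n → h n = 0) :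
    genus h = ∑ k ∈ Ico 1 N, ((k : ℤ) - 1) * h k := by
  have hsupp : (Function.support fun n : ℤ ↦ if 2 ≤ n then (n - 1) * h n else 0) ⊆
      ((Ico 1 N).map (Nat.castEmbedding : ℕ ↪ ℤ) : Set ℤ) := by
    intro n hn
    have h2 : 2 ≤ n := by_contra fun h2 ↦ hn (if_neg h2)
    have hnN : n < N := by_contra fun hnN ↦ hn (by simp [h2, hN n (not_lt.mp hnN)])
    simp only [coe_map, Set.mem_image, mem_coe, mem_Ico]
    exact ⟨n.toNat, by omega, by simp; omega⟩
  rw [genus, finsum_eq_sum_of_support_subset _ hsupp, sum_map]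
  refine sum_congr rfl fun k hk ↦ ?_
  obtain ⟨hk1, -⟩ := mem_Ico.mp hk
  rcases hk1.eq_or_lt with rfl | hk2
  · simp
  · simp [Nat.castEmbedding, show (2 : ℤ) ≤ k by omega]

theorem sum_range_add_mul_sub (a : ℤ) (s : ℕ) :
    ∑ j ∈ range s, (a + j) * (s - j) = a * (s + 1).choose 2 + (s + 1).choose 3 := by
  induction s generalizing a with
  | zero => simp [Nat.choose_eq_zero_of_lt]
  | succ s ih =>
    rw [sum_range_succ', Nat.choose_succ_succ' (s + 1), Nat.choose_succ_succ' (s + 1) 2,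
      Nat.choose_one_right]
    have hshift : ∑ j ∈ range s, (a + (j + 1 : ℕ)) * ((s + 1 : ℕ) - (j + 1 : ℕ) : ℤ) =
        ∑ j ∈ range s, (a + 1 + j) * (s - j) :=
      sum_congr rfl fun j _ ↦ by push_cast; ring
    rw [hshift, ih]
    push_cast
    ring

theorem two_mul_choose_two (s : ℕ) : 2 * ((s + 1).choose 2 : ℤ) = (s + 1) * s := by
  have := Nat.add_one_mul_choose_eq s 1
  rw [Nat.choose_one_right] at this
  exact_mod_cast (this.trans (mul_comm _ _)).symm

theorem genus_ordinaryHVector {s : ℕ} (hs : 1 ≤ s) :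
    genus (ordinaryHVector s) = 2 * (s + 1).choose 3 - (s + 1).choose 2 + 1 := by
  rw [genus_eq_sum_Ico (ordinaryHVector s) s fun n hn ↦ if_neg (by omega)]
  induction s, hs using Nat.le_induction with
  | base => simp
  | succ s hs ih =>
    have hlast : ordinaryHVector (s + 1) s = s + 1 := if_pos (by omega)
    have hprefix : ∑ k ∈ Ico 1 s, ((k : ℤ) - 1) * ordinaryHVector (s + 1) k =
        ∑ k ∈ Ico 1 s, ((k : ℤ) - 1) * ordinaryHVector s k :=
      sum_congr rfl fun k hk ↦ by
        have := mem_Ico.mp hk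
        simp only [ordinaryHVector]
        rw [if_pos (by omega), if_pos (by omega)]
    rw [sum_Ico_succ_top hs, hlast, hprefix, ih, Nat.choose_succ_succ' (s + 1) 2,
      Nat.choose_succ_succ' (s + 1) 1, Nat.choose_one_right]
    push_cast
    linear_combination -two_mul_choose_two s

theorem genus_unionHVector (s : ℕ) {t : ℕ} (ht : 1 ≤ t) :
    genus (unionHVector s t) =
      genus (ordinaryHVector t) + ∑ j ∈ range s, ((t : ℤ) - 1 + j) * (s - j) := by
  rw [genus_eq_sum_Ico (unionHVector s t) (t + s) fun n hn ↦ by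
      simp only [unionHVector]; split_ifs <;> omega,
    genus_eq_sum_Ico (ordinaryHVector t) t fun n hn ↦ if_neg (by omega),
    ← sum_Ico_consecutive _ ht (Nat.le_add_right t s), sum_Ico_eq_sum_range _ t,
    Nat.add_sub_cancel_left]
  congr 1
  · refine sum_congr rfl fun k hk ↦ ?_
    have := mem_Ico.mp hk
    simp [unionHVector, ordinaryHVector, show (k : ℤ) ≤ t - 1 by omega]
  · refine sum_congr rfl fun j hj ↦ ?_
    have := mem_range.mp hj
    simp only [unionHVector]
    rw [if_neg (by omega), if_pos (by push_cast; omega)]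
    push_cast
    ring

theorem intersection_number_Cs_Ct (s t : ℕ) (hs : 1 ≤ s) (hst : s ≤ t)
    (hS hT hU : ℤ → ℤ)
    (hhS : ∀ n, hS n = if 0 ≤ n ∧ n ≤ (s : ℤ) - 1 then n + 1 else 0)
    (hhT : ∀ n, hT n = if 0 ≤ n ∧ n ≤ (t : ℤ) - 1 then n + 1 else 0)
    (hhU : ∀ n, hU n = if 0 ≤ n ∧ n ≤ (t : ℤ) - 1 then n + 1
      else if (t : ℤ) ≤ n ∧ n ≤ (t : ℤ) + (s : ℤ) - 1 then (t : ℤ) + (s : ℤ) - n else 0) :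
    genus hU - genus hS - genus hT + 1 =
      ((s + 1).choose 2 : ℤ) * (t : ℤ) - ((s + 1).choose 3 : ℤ) := by
  obtain rfl : hS = ordinaryHVector s := funext hhS
  obtain rfl : hT = ordinaryHVector t := funext hhT
  obtain rfl : hU = unionHVector s t := funext hhU
  rw [genus_unionHVector s (hs.trans hst), sum_range_add_mul_sub, genus_ordinaryHVector hs]
  ring
end

section
/- Let k_1 < k_2 < ... < k_s be strictly increasing positive integers. Define h : ℤ → ℤ by h(n) = #{i ∈ {1,...,s} : s - i ≤ n ≤ k_i + s - i - 1} for n ≥ 0 and h(n) = 0 for n < 0. Then h is C2-admissible with parameter s, and its biliaison type recovers the k_i: for each 1 ≤ i ≤ s, #{n ∈ ℤ : h(n) ≥ s+1-i} = k_i. -/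
theorem biliaison_type_realization (s : ℤ) (hs : 1 ≤ s) (k : ℤ → ℤ)
    (hpos : ∀ i, 1 ≤ i → i ≤ s → 0 < k i)
    (hmono : ∀ i, 1 ≤ i → i < s → k i < k (i + 1))
    (h : ℤ → ℤ)
    (hdef : ∀ n, h n = if n < 0 then 0 else
      (((Finset.Icc (1 : ℤ) s).filter
        (fun i => s - i ≤ n ∧ n ≤ k i + s - i - 1)).card : ℤ)) :
    C2Admissible h s ∧
      ∀ i, 1 ≤ i → i ≤ s → ({n : ℤ | s + 1 - i ≤ h n}.ncard : ℤ) = k i := by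
  have kmono : ∀ i : ℤ, 1 ≤ i → ∀ j : ℤ, i ≤ j → j ≤ s → k i + (j - i) ≤ k j := by
    intro i h1
    refine Int.le_induction ?_ ?_
    · intro _; omega
    · intro n hn ih hns
      have h2 := ih (by omega)
      have h3 := hmono n (by omega) (by omega)
      omega
  have kge : ∀ i : ℤ, 1 ≤ i → i ≤ s → i ≤ k i := by
    intro i h1 h2
    have := kmono 1 le_rfl i h1 h2
    have := hpos 1 le_rfl hs
    omega
  set F : ℤ → Finset ℤ :=
    fun n => (Finset.Icc (1 : ℤ) s).filter (fun i => s - i ≤ n ∧ n ≤ k i + s - i - 1) with hF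
  have hmemF : ∀ n i : ℤ, i ∈ F n ↔ (1 ≤ i ∧ i ≤ s ∧ s - i ≤ n ∧ n ≤ k i + s - i - 1) := by
    intro n i
    simp [hF, Finset.mem_filter, Finset.mem_Icc, and_assoc]
  have hval : ∀ n : ℤ, 0 ≤ n → h n = ((F n).card : ℤ) := by
    intro n hn
    rw [hdef n, if_neg (by omega)]
  refine ⟨⟨hs, ?_, ?_, ?_, ?_⟩, ?_⟩
  · -- h n = 0 for n < 0
    intro n hn
    rw [hdef n, if_pos hn]
  · -- h n = n + 1 for 0 ≤ n ≤ s - 1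
    intro n hn0 hn1
    have hset : F n = Finset.Icc (s - n) s := by
      ext i
      rw [hmemF, Finset.mem_Icc]
      constructor
      · intro hi; omega
      · intro hi
        have := kge i (by omega) (by omega)
        omega
    rw [hval n hn0, hset, Int.card_Icc]
    omega
  · -- decreasing for n ≥ s - 1
    intro n hn
    have hn0 : (0 : ℤ) ≤ n := by omega
    rw [hval n hn0, hval (n + 1) (by omega)]
    have hsub : F (n + 1) ⊆ F n := by
      intro i hi
      rw [hmemF] at hi ⊢
      omega
    exact_mod_cast Finset.card_le_card hsub
  · -- eventually zero
    refine ⟨k s + s, ?_⟩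
    intro n hn
    have hks := hpos s hs le_rfl
    have hset : F n = ∅ := by
      ext i
      simp only [Finset.notMem_empty, iff_false, hmemF]
      intro hcon
      have := kmono i hcon.1 s hcon.2.1 le_rfl
      omega
    rw [hval n (by omega), hset]
    simp
  · -- biliaison type
    intro i hi1 hi2
    have hki := hpos i hi1 hi2
    have hseteq : {n : ℤ | s + 1 - i ≤ h n} = Set.Icc (s - i) (k i + s - i - 1) := by
      ext n
      simp only [Set.mem_setOf_eq, Set.mem_Icc]
      constructor
      · intro hge
        have hn0 : (0 : ℤ) ≤ n := by
          by_contra hc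
          rw [hdef n, if_pos (by omega)] at hge
          omega
        by_contra hc
        rcases not_and_or.mp hc with hc | hc
        · -- n < s - i : every j in F n has j > i
          have hsub : F n ⊆ Finset.Icc (i + 1) s := by
            intro j hj
            rw [hmemF] at hj
            rw [Finset.mem_Icc]
            omega
          have hcard := Finset.card_le_card hsub
          rw [Int.card_Icc] at hcard
          have hv := hval n hn0
          omega
        · -- n > k i + s - i - 1 : every j in F n has j > i
          have hsub : F n ⊆ Finset.Icc (i + 1) s := by
            intro j hj
            rw [hmemF] at hj
            rw [Finset.mem_Icc]
            constructor
            · by_contra hq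
              have := kmono j hj.1 i (by omega) hi2
              omega
            · exact hj.2.1
          have hcard := Finset.card_le_card hsub
          rw [Int.card_Icc] at hcard
          have hv := hval n hn0
          omega
      · intro ⟨h1, h2⟩
        have hn0 : (0 : ℤ) ≤ n := by omega
        have hsub : Finset.Icc i s ⊆ F n := by
          intro j hj
          rw [Finset.mem_Icc] at hj
          rw [hmemF]
          have := kmono i hi1 j hj.1 hj.2
          omega
        have hcard := Finset.card_le_card hsub
        rw [Int.card_Icc] at hcard
        have hv := hval n hn0
        omega
    rw [hseteq, ← Finset.coe_Icc, Set.ncard_coe_finset, Int.card_Icc]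
    omega
end

section
/- Let k_1 < k_2 < ... < k_s be strictly increasing positive integers with no gaps, i.e., k_{i+1} ≤ k_i + 2 for all 1 ≤ i ≤ s-1. Then the C2-admissible function h with biliaison type (k_1,...,k_s), defined by h(n) = #{i ∈ {1,...,s} : s-i ≤ n ≤ k_i + s - i - 1} for n ≥ 0 and h(n)=0 for n<0, is of decreasing type. -/
/-!
Index `i` contributes to `h` exactly on the interval `[s - i, k i + s - i - 1]`. The left ends
decrease and, because the `k i` increase, the right ends increase; the no-gap condition says
that they increase by at most one at a time. A strict drop `h (a + 1) < h a` means that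
some interval ends at `a`, and from then on every interval still alive started earlier, so `h`
can only lose intervals. As long as `h (n + 1) > 0` some right end lies beyond `n`, so by the
unit steps of the right ends some interval ends exactly at `n + 1`, and `h` drops again.
-/

noncomputable def coveringIndices (s : ℤ) (l u : ℤ → ℤ) (n : ℤ) : Finset ℤ :=
  (Finset.Icc 1 s).filter fun i => l i ≤ n ∧ n ≤ u i

lemma exists_mem_Ioc_apply_eq_add_one {u : ℤ → ℤ} {i₀ j₀ n : ℤ}
    (hstep : ∀ i, i₀ ≤ i → i < j₀ → u (i + 1) ≤ u i + 1) (hij : i₀ < j₀)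
    (hi₀ : u i₀ ≤ n) (hj₀ : n + 1 ≤ u j₀) : ∃ j ∈ Set.Ioc i₀ j₀, u j = n + 1 := by
  obtain ⟨j, ⟨hi₀j, hjj₀, hnj⟩, hleast⟩ := Int.exists_least_of_bdd
    (P := fun j => i₀ < j ∧ j ≤ j₀ ∧ n + 1 ≤ u j) ⟨i₀, fun _ h => h.1.le⟩ ⟨j₀, hij, le_rfl, hj₀⟩
  have hprev : u (j - 1) ≤ n := by
    rcases eq_or_lt_of_le (Int.le_sub_one_of_lt hi₀j) with h | h
    · rwa [← h]
    · by_contra! hn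
      have := hleast (j - 1) ⟨h, by omega, by omega⟩
      omega
  have := hstep (j - 1) (by omega) (by omega)
  rw [sub_add_cancel] at this
  exact ⟨j, ⟨hi₀j, hjj₀⟩, by omega⟩

section
variable {s : ℤ} {l u : ℤ → ℤ}

@[simp]
lemma mem_coveringIndices {n i : ℤ} :
    i ∈ coveringIndices s l u n ↔ i ∈ Set.Icc 1 s ∧ l i ≤ n ∧ n ≤ u i := by
  simp [coveringIndices]

lemma exists_upper_eq_of_card_coveringIndices_lt {n : ℤ}
    (hlt : (coveringIndices s l u (n + 1)).card < (coveringIndices s l u n).card) :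
    ∃ i ∈ Set.Icc 1 s, l i ≤ n ∧ u i = n := by
  obtain ⟨i, hi, hi'⟩ := Finset.not_subset.mp fun hsub => (Finset.card_le_card hsub).not_gt hlt
  simp only [mem_coveringIndices, not_and, not_le] at hi hi'
  exact ⟨i, hi.1, hi.2.1, by have := hi' hi.1 (by omega); omega⟩

/-- Once an interval `[l i₀, u i₀]` has closed by time `n`, every interval alive at `n + 1` has
index above `i₀`, hence started by `l i₀ ≤ n`. -/
lemma coveringIndices_add_one_subset (hl : AntitoneOn l (Set.Icc 1 s))
    (hu : MonotoneOn u (Set.Icc 1 s)) {i₀ n : ℤ} (hi₀ : i₀ ∈ Set.Icc 1 s) (hli₀ : l i₀ ≤ n)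
    (hui₀ : u i₀ ≤ n) : coveringIndices s l u (n + 1) ⊆ coveringIndices s l u n := by
  intro i hi
  rw [mem_coveringIndices] at hi ⊢
  obtain ⟨hi, _, hni⟩ := hi
  have hi₀i : i₀ ≤ i := by
    by_contra! hii₀
    have := hu hi hi₀ hii₀.le
    omega
  exact ⟨hi, (hl hi₀ hi hi₀i).trans hli₀, by omega⟩

lemma card_coveringIndices_add_one_add_one_lt (hl : AntitoneOn l (Set.Icc 1 s))
    (hu : MonotoneOn u (Set.Icc 1 s)) (hstep : ∀ i, 1 ≤ i → i < s → u (i + 1) ≤ u i + 1)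
    {n : ℤ} (hlt : (coveringIndices s l u (n + 1)).card < (coveringIndices s l u n).card)
    (hpos : 0 < (coveringIndices s l u (n + 1)).card) :
    (coveringIndices s l u (n + 1 + 1)).card < (coveringIndices s l u (n + 1)).card := by
  obtain ⟨i₀, hi₀, hli₀, hui₀⟩ := exists_upper_eq_of_card_coveringIndices_lt hlt
  obtain ⟨j₀, hj₀mem⟩ := Finset.card_pos.mp hpos
  obtain ⟨hj₀, _, hnj₀⟩ := mem_coveringIndices.mp hj₀mem
  have hi₀j₀ : i₀ < j₀ := by
    by_contra! hj₀i₀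
    have := hu hj₀ hi₀ hj₀i₀
    omega
  obtain ⟨j, ⟨hi₀j, hjj₀⟩, huj⟩ := exists_mem_Ioc_apply_eq_add_one
    (fun i hi hij => hstep i (hi₀.1.trans hi) (hij.trans_le hj₀.2)) hi₀j₀ hui₀.le hnj₀
  have hj : j ∈ Set.Icc 1 s := ⟨hi₀.1.trans hi₀j.le, hjj₀.trans hj₀.2⟩
  have hsub : coveringIndices s l u (n + 1 + 1) ⊆ coveringIndices s l u (n + 1) :=
    coveringIndices_add_one_subset hl hu hi₀ (by omega) (by omega)
  refine Finset.card_lt_card ((Finset.ssubset_iff_of_subset hsub).mpr ⟨j, ?_, ?_⟩)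
  · exact mem_coveringIndices.mpr ⟨hj, (hl hi₀ hj hi₀j.le).trans (by omega), huj.ge⟩
  · simp only [mem_coveringIndices, huj]
    omega

theorem decreasingType_card_coveringIndices (hl : AntitoneOn l (Set.Icc 1 s))
    (hu : MonotoneOn u (Set.Icc 1 s)) (hstep : ∀ i, 1 ≤ i → i < s → u (i + 1) ≤ u i + 1) :
    DecreasingType fun n => ((coveringIndices s l u n).card : ℤ) := by
  intro a ha n han
  simp only [Nat.cast_lt, Nat.cast_eq_zero] at ha ⊢
  obtain ⟨i₀, hi₀, hli₀, hui₀⟩ := exists_upper_eq_of_card_coveringIndices_lt ha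
  induction n, han using Int.leInduction with
  | base => exact Or.inl ha
  | succ m ham ih =>
    rcases ih with hlt | hzero
    · rcases Nat.eq_zero_or_pos (coveringIndices s l u (m + 1)).card with hzero | hpos
      · exact Or.inr hzero
      · left
        exact card_coveringIndices_add_one_add_one_lt hl hu hstep hlt hpos
    · right
      have := Finset.card_le_card
        (coveringIndices_add_one_subset (n := m) hl hu hi₀ (by omega) (by omega))
      omega

end

theorem no_gaps_implies_decreasing_type_general (s : ℤ) (k : ℤ → ℤ)
    (hmono : ∀ i, 1 ≤ i → i < s → k i < k (i + 1))
    (hnogap : ∀ i, 1 ≤ i → i ≤ s - 1 → k (i + 1) ≤ k i + 2)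
    (h : ℤ → ℤ)
    (hdef : ∀ n, h n = if n < 0 then 0 else
      (((Finset.Icc (1 : ℤ) s).filter
        (fun i => s - i ≤ n ∧ n ≤ k i + s - i - 1)).card : ℤ)) :
    DecreasingType h := by
  have hh : h = fun n =>
      ((coveringIndices s (fun i => s - i) (fun i => k i + s - i - 1) n).card : ℤ) := by
    funext n
    rw [hdef]
    split_ifs with hn
    · refine (Nat.cast_eq_zero.mpr (Finset.card_eq_zero.mpr ?_)).symm
      refine Finset.eq_empty_of_forall_notMem fun i hi => ?_
      simp only [mem_coveringIndices, Set.mem_Icc] at hi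
      omega
    · rfl
  subst hh
  refine decreasingType_card_coveringIndices (fun i _ j _ hij => by omega) ?_ ?_
  · refine monotoneOn_of_le_add_one Set.ordConnected_Icc fun i _ hi hi' => ?_
    have := hmono i hi.1 ((lt_add_one i).trans_le hi'.2)
    omega
  · intro i hi his
    have := hnogap i hi (by omega)
    omega

theorem no_gaps_implies_decreasing_type (s : ℤ) (hs : 1 ≤ s) (k : ℤ → ℤ)
    (hpos : ∀ i, 1 ≤ i → i ≤ s → 0 < k i)
    (hmono : ∀ i, 1 ≤ i → i < s → k i < k (i + 1))
    (hnogap : ∀ i, 1 ≤ i → i ≤ s - 1 → k (i + 1) ≤ k i + 2)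
    (h : ℤ → ℤ)
    (hdef : ∀ n, h n = if n < 0 then 0 else
      (((Finset.Icc (1 : ℤ) s).filter
        (fun i => s - i ≤ n ∧ n ≤ k i + s - i - 1)).card : ℤ)) :
    DecreasingType h :=
  no_gaps_implies_decreasing_type_general s k hmono hnogap h hdef
end
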